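/- arXiv:2310.04223 — 2 statements merged into one kernel-verified Lean document; each statement's English description precedes it below -/
import Mathlib

section
/- Downward cube property of median graphs: let G be a finite median graph, z a fixed basepoint, and v any vertex. Let Λ(v) be the set of neighbors u of v with d(z,u) = d(z,v) − 1. Then v together with Λ(v) is contained in a unique cube C(v) of G of dimension |Λ(v)|. -/
/-!
Root the median graph at `z` and order the vertices by `x ≤ y` iff `x` lies on a geodesic from `z`
to `y`; this is a meet-semilattice whose meet `x ⊓ y` is the median of `z, x, y`. The cube `C(v)`
consists of the meets `v ⊓ ⨅ S` over `S ⊆ Λ(v)`. Such a meet lies exactly `|S|` levels below `v`: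
meeting with one `u ∈ S` sends the rest of `S` into `Λ(u)`, injectively because a median graph
has no `K_{2,3}`, so induction on `d(z, v)` applies. As the meet of two of these vertices lies on a
geodesic between them, `S ↦ v ⊓ ⨅ S` is an isometric embedding of the hypercube `Q_{|Λ(v)|}`.

For uniqueness, any other such cube can be relabelled to agree with this embedding on `v` and
`Λ(v)`. Two hypercube embeddings into a `K_{2,3}`-free graph that agree on a vertex and its
neighbours agree everywhere: every further vertex is a common neighbour of two vertices, already
determined, that have a third common neighbour, also determined.
-/

/-- The metric interval between `u` and `v` in a graph `G`. -/
def interval {V : Type*} (G : SimpleGraph V) (u v : V) : Set V :=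
  {w | G.dist u w + G.dist w v = G.dist u v}

/-- A graph is median if every triple of vertices has a unique median. -/
def MedianGraph {V : Type*} (G : SimpleGraph V) : Prop :=
  ∀ x y z : V, ∃! m : V,
    m ∈ interval G x y ∧ m ∈ interval G y z ∧ m ∈ interval G z x

/-- The hypercube graph `Q_n`. -/
def cubeGraph (n : ℕ) : SimpleGraph (Fin n → Bool) :=
  SimpleGraph.fromRel (fun u v => (Finset.univ.filter fun i => u i ≠ v i).card = 1)

/-- The downward neighbors of `v` with respect to the basepoint `z`:
`Λ(v) = N(v) ∩ I(z,v)`. -/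
def downNbrs {V : Type*} (G : SimpleGraph V) (z v : V) : Set V :=
  {u | G.Adj v u ∧ G.dist z u + 1 = G.dist z v}

section

open Finset Function SimpleGraph

variable {V : Type*} {G : SimpleGraph V}

def SimpleGraph.K23Free (G : SimpleGraph V) : Prop :=
  ∀ ⦃x y p q r : V⦄, x ≠ y → p ≠ q → G.Adj x p → G.Adj y p → G.Adj x q → G.Adj y q →
    G.Adj x r → G.Adj y r → r = p ∨ r = q

section Cube

variable {n : ℕ}

lemma cubeGraph_adj {a b : Fin n → Bool} : (cubeGraph n).Adj a b ↔ hammingDist a b = 1 := by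
  change a ≠ b ∧ (hammingDist a b = 1 ∨ hammingDist b a = 1) ↔ _
  rw [hammingDist_comm b a, or_self, and_iff_right_iff_imp]
  rintro h rfl
  simp at h

lemma hammingDist_add_card_add_card {ι : Type*} [Fintype ι] (a b : ι → Bool) :
    hammingDist a b + #{i | a i} + #{i | b i} = 2 * #{i | (a ⊔ b) i} := by
  simp only [hammingDist, card_filter, ← sum_add_distrib, mul_sum, Pi.sup_apply]
  refine sum_congr rfl fun i _ ↦ ?_
  cases a i <;> cases b i <;> simp

def cubeGraph.xorIso (x : Fin n → Bool) : cubeGraph n ≃g cubeGraph n where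
  toFun a i := xor (x i) (a i)
  invFun a i := xor (x i) (a i)
  left_inv a := by simp
  right_inv a := by simp
  map_rel_iff' {a b} := by
    simp only [Equiv.coe_fn_mk, cubeGraph_adj]
    rw [hammingDist_comp (fun i ↦ xor (x i)) fun i ↦ ?_]
    exact fun p q h ↦ by simpa using h

lemma exists_eq_xor_of_cubeGraph_adj {a b : Fin n → Bool} (h : (cubeGraph n).Adj a b) :
    ∃ c, b = fun i ↦ xor (a i) (decide (i = c)) := by
  obtain ⟨c, hc⟩ := card_eq_one.mp (cubeGraph_adj.mp h)
  refine ⟨c, funext fun i ↦ ?_⟩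
  have := congrArg (i ∈ ·) hc
  simp only [mem_filter, mem_univ, true_and, mem_singleton, eq_iff_iff] at this
  by_cases hi : i = c
  · subst hi
    revert this
    cases a i <;> cases b i <;> simp
  · simp_all

theorem exists_cubeEmbedding_normalized {C : Set V} (φ : G.induce C ≃g cubeGraph n) {v : V}
    (hv : v ∈ C) {e : Fin n → V} (he : Injective e) (heC : ∀ i, e i ∈ C)
    (hadj : ∀ i, G.Adj v (e i)) :
    ∃ (Φ : cubeGraph n ↪g G) (π : Equiv.Perm (Fin n)), Set.range Φ = C ∧
      Φ (fun _ ↦ false) = v ∧ ∀ c, Φ (fun i ↦ decide (i = c)) = e (π c) := by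
  set n₀ := φ ⟨v, hv⟩
  let ψ : cubeGraph n ↪g G := (Embedding.induce C).comp φ.symm.toEmbedding
  have hψ (x : C) : ψ (φ x) = x := by simp [ψ]
  have hnbr (i : Fin n) : (cubeGraph n).Adj n₀ (φ ⟨e i, heC i⟩) := φ.map_adj_iff.mpr (hadj i)
  -- `φ (e i)` is `n₀` with coordinate `g i` flipped; translate by `n₀` and reindex by `g⁻¹`
  choose g hg using fun i ↦ exists_eq_xor_of_cubeGraph_adj (hnbr i)
  have hg_inj : Injective g := fun i j hij ↦ by
    have : φ ⟨e i, heC i⟩ = φ ⟨e j, heC j⟩ := by rw [hg i, hg j, hij]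
    exact he (congrArg Subtype.val (φ.injective this))
  refine ⟨ψ.comp (cubeGraph.xorIso n₀).toEmbedding,
    (Equiv.ofBijective g hg_inj.bijective_of_finite).symm, ?_, ?_, fun c ↦ ?_⟩
  · change Set.range (ψ ∘ cubeGraph.xorIso n₀) = C
    rw [(cubeGraph.xorIso n₀).surjective.range_comp]
    change Set.range (Subtype.val ∘ φ.symm) = C
    rw [φ.symm.surjective.range_comp, Subtype.range_coe]
  · simp [ψ, cubeGraph.xorIso, n₀]
  · have hc : g ((Equiv.ofBijective g hg_inj.bijective_of_finite).symm c) = c :=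
      Equiv.ofBijective_apply_symm_apply _ _ c
    change ψ (fun i ↦ xor (n₀ i) (decide (i = c))) = _
    rw [show (fun i ↦ xor (n₀ i) (decide (i = c))) = φ ⟨e _, heC _⟩ by rw [hg, hc], hψ]

theorem SimpleGraph.K23Free.cubeEmbedding_ext (hG : G.K23Free) {Φ f : cubeGraph n ↪g G}
    (h₀ : Φ (fun _ ↦ false) = f (fun _ ↦ false))
    (h₁ : ∀ c, Φ (fun i ↦ decide (i = c)) = f (fun i ↦ decide (i = c))) : Φ = f := by
  classical
  let χ (s : Finset (Fin n)) : Fin n → Bool := fun i ↦ decide (i ∈ s)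
  have hχ : Injective χ := fun s t h ↦ by ext i; simpa [χ] using congrFun h i
  have hadj {s : Finset (Fin n)} {i : Fin n} (hi : i ∉ s) :
      (cubeGraph n).Adj (χ s) (χ (insert i s)) := by
    rw [cubeGraph_adj, hammingDist, card_eq_one]
    exact ⟨i, by ext j; by_cases j = i <;> simp_all [χ]⟩
  have key (s : Finset (Fin n)) :
      Φ (χ s) = f (χ s) ∧ ∀ i, Φ (χ (insert i s)) = f (χ (insert i s)) := by
    induction s using Finset.induction_on with
    | empty => exact ⟨by simpa [χ] using h₀, fun i ↦ by simpa [χ] using h₁ i⟩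
    | insert j s hj ih =>
      refine ⟨ih.2 j, fun i ↦ ?_⟩
      by_cases hi : i ∈ insert j s
      · rw [insert_eq_of_mem hi]
        exact ih.2 j
      obtain ⟨hij, his⟩ : i ≠ j ∧ i ∉ s := by simpa using hi
      have hj' : j ∉ insert i s := by simpa [hj] using hij.symm
      have hi_adj : (cubeGraph n).Adj (χ (insert i s)) (χ (insert i (insert j s))) := by
        rw [insert_comm]
        exact hadj hj'
      by_contra hne
      -- `Φ a`, `f a` and `f (χ s)` are common neighbours of `f (χ (insert j s))` and
      -- `f (χ (insert i s))`, where `a = χ (insert i (insert j s))`.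
      have := hG (x := f (χ (insert j s))) (y := f (χ (insert i s)))
        (p := f (χ (insert i (insert j s)))) (q := f (χ s))
        (f.injective.ne (hχ.ne fun h ↦ hj' (h ▸ mem_insert_self j s)))
        (f.injective.ne (hχ.ne fun h ↦ his (h ▸ mem_insert_self i _)))
        (f.map_adj_iff.mpr (hadj hi)) (f.map_adj_iff.mpr hi_adj)
        (f.map_adj_iff.mpr (hadj hj).symm) (f.map_adj_iff.mpr (hadj his).symm)
        (ih.2 j ▸ Φ.map_adj_iff.mpr (hadj hi)) (ih.2 i ▸ Φ.map_adj_iff.mpr hi_adj)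
      refine this.elim hne fun h ↦ his ?_
      rw [← hχ (Φ.injective (h.trans ih.1.symm))]
      exact mem_insert_self i _
  exact RelEmbedding.ext fun a ↦ by simpa [χ] using (key {i | a i}).1

end Cube

section InfWith

variable {α : Type*} [SemilatticeInf α] [DecidableEq α]

def infWith (v : α) (s : Finset α) : α := (insert v s).inf' (insert_nonempty v s) id

lemma le_infWith_iff {v w : α} {s : Finset α} : w ≤ infWith v s ↔ w ≤ v ∧ ∀ u ∈ s, w ≤ u := by
  simp [infWith]

@[simp] lemma infWith_empty (v : α) : infWith v ∅ = v := by
  simp [infWith]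

lemma infWith_union (v : α) (s t : Finset α) :
    infWith v (s ∪ t) = infWith v s ⊓ infWith v t :=
  eq_of_forall_le_iff fun w ↦ by
    simp only [le_infWith_iff, le_inf_iff, mem_union]
    grind

lemma infWith_insert_of_le {u v : α} (h : u ≤ v) (t : Finset α) :
    infWith v (insert u t) = infWith u (t.image (u ⊓ ·)) :=
  eq_of_forall_le_iff fun w ↦ by
    simp only [le_infWith_iff, mem_insert, forall_mem_image, le_inf_iff]
    grind

lemma infWith_singleton_of_le {u v : α} (h : u ≤ v) : infWith v {u} = u := by
  simpa using infWith_insert_of_le h ∅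

end InfWith

lemma mem_interval {u v w : V} : w ∈ interval G u v ↔ G.dist u w + G.dist w v = G.dist u v :=
  Iff.rfl

lemma mem_interval_comm {u v w : V} : w ∈ interval G u v ↔ w ∈ interval G v u := by
  have := G.dist_comm (u := u) (v := w)
  have := G.dist_comm (u := w) (v := v)
  have := G.dist_comm (u := u) (v := v)
  rw [mem_interval, mem_interval]
  omega

namespace MedianGraph

theorem cliqueFree_three (hmed : MedianGraph G) : G.CliqueFree 3 := by
  classical
  intro t ht
  obtain ⟨a, b, c, hab, hac, hbc, rfl⟩ := is3Clique_iff.mp ht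
  obtain ⟨m, ⟨h₁, h₂, h₃⟩, -⟩ := hmed a b c
  rw [mem_interval, dist_eq_one_iff_adj.mpr hab] at h₁
  rw [mem_interval, dist_eq_one_iff_adj.mpr hbc, G.dist_comm (u := b)] at h₂
  rw [mem_interval, dist_eq_one_iff_adj.mpr hac.symm, G.dist_comm (u := c),
    G.dist_comm (u := m) (v := a)] at h₃
  -- summing: `2 * (d(a,m) + d(b,m) + d(c,m)) = 3`
  omega

theorem dist_eq_two (hmed : MedianGraph G) {x p q : V} (hp : G.Adj x p) (hq : G.Adj x q)
    (hpq : p ≠ q) : G.dist p q = 2 := by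
  have hle : G.dist p q ≤ 2 := dist_le (.cons hp.symm (.cons hq .nil))
  have hpos : 0 < G.dist p q := (hp.symm.reachable.trans hq.reachable).pos_dist_of_ne hpq
  have hnadj : G.dist p q ≠ 1 := fun h ↦ by
    classical
    exact hmed.cliqueFree_three {x, p, q}
      (is3Clique_triple_iff.mpr ⟨hp, hq, dist_eq_one_iff_adj.mp h⟩)
  omega

theorem k23Free (hmed : MedianGraph G) : G.K23Free := by
  intro x y p q r hxy hpq hxp hyp hxq hyq hxr hyr
  by_contra! hr
  have isMedian : ∀ w, G.Adj w p → G.Adj w q → G.Adj w r →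
      w ∈ interval G p q ∧ w ∈ interval G q r ∧ w ∈ interval G r p := by
    intro w hp hq hr'
    simp [mem_interval, hmed.dist_eq_two hp hq hpq, hmed.dist_eq_two hq hr' hr.2.symm,
      hmed.dist_eq_two hr' hp hr.1, dist_eq_one_iff_adj.mpr hp, dist_eq_one_iff_adj.mpr hq,
      dist_eq_one_iff_adj.mpr hr', dist_eq_one_iff_adj.mpr hp.symm,
      dist_eq_one_iff_adj.mpr hq.symm, dist_eq_one_iff_adj.mpr hr'.symm]
  exact hxy ((hmed p q r).unique (isMedian x hxp hxq hxr) (isMedian y hyp hyq hyr))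

theorem mem_interval_median (hmed : MedianGraph G) (hconn : G.Connected) {z x y m w : V}
    (hm : m ∈ interval G z x ∧ m ∈ interval G x y ∧ m ∈ interval G y z)
    (hx : w ∈ interval G z x) (hy : w ∈ interval G z y) : w ∈ interval G z m := by
  -- the median `p` of `w, x, y` is also a median of `z, x, y`, so `p = m`
  obtain ⟨p, ⟨hpx, hpy, hpw⟩, -⟩ := hmed w x y
  rw [mem_interval_comm] at hpw
  have := hconn.dist_triangle (u := z) (v := w) (w := p)
  have := hconn.dist_triangle (u := z) (v := p) (w := x)
  have := hconn.dist_triangle (u := z) (v := p) (w := y)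
  rw [mem_interval] at hx hy hpx hpw
  have hp : p ∈ interval G z x ∧ p ∈ interval G x y ∧ p ∈ interval G y z := by
    refine ⟨?_, hpy, mem_interval_comm.mp ?_⟩ <;> rw [mem_interval] <;> omega
  rw [← (hmed z x y).unique hp hm, mem_interval]
  omega

end MedianGraph

/-- The vertices of `G`, to be ordered by `x ≤ y` iff `x` lies on a geodesic from `z` to `y`. -/
@[ext]
structure Rooted (G : SimpleGraph V) (z : V) where
  val : V

namespace Rooted

variable {z : V}

instance [DecidableEq V] : DecidableEq (Rooted G z) :=
  fun x y ↦ decidable_of_iff (x.val = y.val) Rooted.ext_iff.symm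

variable [Fact G.Connected]

instance : PartialOrder (Rooted G z) where
  le x y := x.val ∈ interval G z y.val
  le_refl x := by simp [mem_interval]
  le_trans x y w hxy hyw := by
    have := (Fact.out : G.Connected).dist_triangle (u := x.val) (v := y.val) (w := w.val)
    have := (Fact.out : G.Connected).dist_triangle (u := z) (v := x.val) (w := w.val)
    rw [mem_interval] at *
    omega
  le_antisymm x y hxy hyx := by
    rw [mem_interval] at hxy hyx
    rw [G.dist_comm (u := y.val)] at hyx
    exact Rooted.ext (((Fact.out : G.Connected).preconnected _ _).dist_eq_zero_iff.mp (by omega))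

lemma le_iff {x y : Rooted G z} : x ≤ y ↔ x.val ∈ interval G z y.val := Iff.rfl

variable [Fact (MedianGraph G)]

noncomputable instance : SemilatticeInf (Rooted G z) where
  inf x y := ⟨((Fact.out : MedianGraph G) z x.val y.val).exists.choose⟩
  inf_le_left x y := (((Fact.out : MedianGraph G) z x.val y.val).exists.choose_spec).1
  inf_le_right x y :=
    mem_interval_comm.mp (((Fact.out : MedianGraph G) z x.val y.val).exists.choose_spec).2.2
  le_inf _ x y hx hy := (Fact.out : MedianGraph G).mem_interval_median Fact.out
    ((Fact.out : MedianGraph G) z x.val y.val).exists.choose_spec hx hy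

lemma dist_inf (x y : Rooted G z) :
    G.dist x.val (x ⊓ y).val + G.dist (x ⊓ y).val y.val = G.dist x.val y.val :=
  ((Fact.out : MedianGraph G) z x.val y.val).exists.choose_spec.2.1

variable {u u' v : Rooted G z}

omit [Fact (MedianGraph G)] in
lemma le_of_mem_downNbrs (hu : u.val ∈ downNbrs G z v.val) : u ≤ v := by
  rw [le_iff, mem_interval, dist_eq_one_iff_adj.mpr hu.1.symm]
  exact hu.2

lemma inf_mem_downNbrs (hu : u.val ∈ downNbrs G z v.val) (hu' : u'.val ∈ downNbrs G z v.val)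
    (hne : u ≠ u') : (u ⊓ u').val ∈ downNbrs G z u.val := by
  have huu' := (Fact.out : MedianGraph G).dist_eq_two hu.1 hu'.1 (hne <| Rooted.ext ·)
  have hm := dist_inf u u'
  have hmu := (inf_le_left : u ⊓ u' ≤ u)
  have hmu' := (inf_le_right : u ⊓ u' ≤ u')
  rw [le_iff, mem_interval] at hmu hmu'
  rw [G.dist_comm (u := u.val)] at hm
  have h₁ : G.dist (u ⊓ u').val u.val = 1 := by have := hu.2; have := hu'.2; omega
  exact ⟨(dist_eq_one_iff_adj.mp h₁).symm, by omega⟩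

lemma inf_injOn_downNbrs (hu : u.val ∈ downNbrs G z v.val) :
    Set.InjOn (u ⊓ ·) {w | w.val ∈ downNbrs G z v.val ∧ w ≠ u} := by
  rintro w ⟨hw, hwu⟩ w' ⟨hw', hw'u⟩ (heq : u ⊓ w = u ⊓ w')
  by_contra hne
  have hm := inf_mem_downNbrs hu hw hwu.symm
  have hmw := inf_comm u w ▸ inf_mem_downNbrs hw hu hwu
  have hmw' := heq ▸ inf_comm u w' ▸ inf_mem_downNbrs hw' hu hw'u
  have hvm : v.val ≠ (u ⊓ w).val := fun h ↦ by
    have := hu.2; have := hm.2; rw [← h] at this; omega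
  -- otherwise `v` and `u ⊓ w` have the three common neighbours `w`, `w'`, `u`
  have := (Fact.out : MedianGraph G).k23Free hvm (fun h ↦ hne (Rooted.ext h)) hw.1
    hmw.1.symm hw'.1 hmw'.1.symm hu.1 hm.1.symm
  exact this.elim (fun h ↦ hwu (Rooted.ext h).symm) fun h ↦ hw'u (Rooted.ext h).symm

variable [DecidableEq V]

theorem dist_infWith_add_card {s : Finset (Rooted G z)}
    (hs : ∀ u ∈ s, u.val ∈ downNbrs G z v.val) :
    G.dist z (infWith v s).val + #s = G.dist z v.val := by
  induction hv : G.dist z v.val using Nat.strong_induction_on generalizing v s with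
  | _ n ih =>
  obtain rfl | ⟨u, hu⟩ := s.eq_empty_or_nonempty
  · simpa using hv
  have huv := hs u hu
  have hinj : Set.InjOn (u ⊓ ·) (s.erase u) := (inf_injOn_downNbrs huv).mono
    fun w hw ↦ show _ ∧ _ from ⟨hs w (mem_of_mem_erase hw), ne_of_mem_erase hw⟩
  have hdown : ∀ w ∈ (s.erase u).image (u ⊓ ·), w.val ∈ downNbrs G z u.val := by
    simp only [forall_mem_image]
    exact fun w hw ↦ inf_mem_downNbrs huv (hs w (mem_of_mem_erase hw)) (ne_of_mem_erase hw).symm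
  have := huv.2
  have := ih _ (by omega) hdown rfl
  rw [← insert_erase hu, infWith_insert_of_le (le_of_mem_downNbrs huv),
    card_insert_of_notMem (notMem_erase u s), ← card_image_of_injOn hinj]
  omega

variable {n : ℕ}

noncomputable def downCubeMap (v : Rooted G z) (e : Fin n → Rooted G z) (a : Fin n → Bool) :
    Rooted G z :=
  infWith v (({i | a i} : Finset (Fin n)).image e)

variable {e : Fin n → Rooted G z}

lemma downCubeMap_inf (a b : Fin n → Bool) :
    downCubeMap v e a ⊓ downCubeMap v e b = downCubeMap v e (a ⊔ b) := by
  simp only [downCubeMap, ← infWith_union, ← image_union, ← filter_or, Pi.sup_apply,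
    Bool.sup_eq_bor, Bool.or_eq_true]

lemma dist_downCubeMap_add_card (he : Injective e)
    (hΛ : ∀ i, (e i).val ∈ downNbrs G z v.val) (a : Fin n → Bool) :
    G.dist z (downCubeMap v e a).val + #{i | a i} = G.dist z v.val := by
  rw [downCubeMap, ← card_image_of_injective _ he]
  exact dist_infWith_add_card (by simpa using fun i _ ↦ hΛ i)

lemma dist_downCubeMap (he : Injective e) (hΛ : ∀ i, (e i).val ∈ downNbrs G z v.val)
    (a b : Fin n → Bool) :
    G.dist (downCubeMap v e a).val (downCubeMap v e b).val = hammingDist a b := by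
  have hab := dist_inf (downCubeMap v e a) (downCubeMap v e b)
  have ha := (inf_le_left : downCubeMap v e a ⊓ downCubeMap v e b ≤ _)
  have hb := (inf_le_right : downCubeMap v e a ⊓ downCubeMap v e b ≤ _)
  rw [downCubeMap_inf] at hab ha hb
  rw [le_iff, mem_interval] at ha hb
  rw [G.dist_comm (u := (downCubeMap v e a).val)] at hab
  have := dist_downCubeMap_add_card he hΛ a
  have := dist_downCubeMap_add_card he hΛ b
  have := dist_downCubeMap_add_card he hΛ (a ⊔ b)
  have := hammingDist_add_card_add_card a b
  omega

end Rooted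

section DownCube

variable [Fact G.Connected] [Fact (MedianGraph G)] [DecidableEq V] {n : ℕ}

variable (G) in
def downCube (z v : V) : Set V :=
  {w | ∃ s : Finset (Rooted G z), (∀ u ∈ s, u.val ∈ downNbrs G z v) ∧
    (infWith (⟨v⟩ : Rooted G z) s).val = w}

lemma mem_downCube_self (z v : V) : v ∈ downCube G z v :=
  ⟨∅, by simp, by simp⟩

lemma downNbrs_subset_downCube (z v : V) : downNbrs G z v ⊆ downCube G z v :=
  fun u hu ↦ ⟨{⟨u⟩}, by simpa using hu, by
    rw [infWith_singleton_of_le (Rooted.le_of_mem_downNbrs hu)]⟩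

noncomputable def downCubeEmbedding (z v : V) (e : Fin n ≃ downNbrs G z v) : cubeGraph n ↪g G :=
  have he : Injective fun i ↦ (⟨e i⟩ : Rooted G z) :=
    fun i j h ↦ e.injective (Subtype.ext (congrArg Rooted.val h))
  { toFun a := (Rooted.downCubeMap ⟨v⟩ (fun i ↦ ⟨e i⟩) a).val
    inj' a b h := hammingDist_eq_zero.mp <| by
      beta_reduce at h
      rw [← Rooted.dist_downCubeMap he (fun i ↦ (e i).2) a b, h, dist_self]
    map_rel_iff' {a b} := by
      change G.Adj (Rooted.downCubeMap _ _ a).val (Rooted.downCubeMap _ _ b).val ↔ _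
      rw [← dist_eq_one_iff_adj,
        Rooted.dist_downCubeMap he (fun i ↦ (e i).2), cubeGraph_adj] }

variable {z v : V}

lemma downCubeEmbedding_false (e : Fin n ≃ downNbrs G z v) :
    downCubeEmbedding z v e (fun _ ↦ false) = v := by
  simp [downCubeEmbedding, Rooted.downCubeMap]

lemma downCubeEmbedding_single (e : Fin n ≃ downNbrs G z v) (c : Fin n) :
    downCubeEmbedding z v e (fun i ↦ decide (i = c)) = e c := by
  have hc : (⟨(e c).val⟩ : Rooted G z) ≤ ⟨v⟩ := Rooted.le_of_mem_downNbrs (e c).2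
  simp [downCubeEmbedding, Rooted.downCubeMap, filter_eq', infWith_singleton_of_le hc]

lemma range_downCubeEmbedding (e : Fin n ≃ downNbrs G z v) :
    Set.range (downCubeEmbedding z v e) = downCube G z v := by
  ext w
  constructor
  · rintro ⟨a, rfl⟩
    exact ⟨_, by simp, rfl⟩
  · rintro ⟨s, hs, rfl⟩
    refine ⟨fun i ↦ decide (⟨(e i).val⟩ ∈ s), congrArg (Rooted.val ∘ infWith _) ?_⟩
    ext u
    simp only [mem_image, mem_filter, mem_univ, true_and, decide_eq_true_eq]
    refine ⟨fun ⟨i, hi, hiu⟩ ↦ hiu ▸ hi, fun hu ↦ ⟨e.symm ⟨u.val, hs u hu⟩, by simpa using hu⟩⟩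

end DownCube

end

/-- Downward cube property: in a finite median graph with basepoint `z`, every vertex `v`
together with `Λ(v)` lies in a unique cube of dimension `|Λ(v)|`. -/
theorem median_downward_cube {V : Type*} [Fintype V] (G : SimpleGraph V)
    (hconn : G.Connected) (hmed : MedianGraph G) (z v : V) :
    ∃! C : Set V, v ∈ C ∧ downNbrs G z v ⊆ C ∧
      Nonempty (G.induce C ≃g cubeGraph (downNbrs G z v).ncard) := by
  classical
  have : Fact G.Connected := ⟨hconn⟩
  have : Fact (MedianGraph G) := ⟨hmed⟩
  let e : Fin (downNbrs G z v).ncard ≃ downNbrs G z v :=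
    (Finite.equivFinOfCardEq (Nat.card_coe_set_eq _)).symm
  refine ⟨downCube G z v, ⟨mem_downCube_self z v, downNbrs_subset_downCube z v, ?_⟩, ?_⟩
  · rw [← range_downCubeEmbedding e]
    exact ⟨(downCubeEmbedding z v e).isoInduceRange.symm⟩
  rintro C ⟨hvC, hΛC, ⟨φ⟩⟩
  obtain ⟨Φ, π, rfl, hΦ₀, hΦ₁⟩ := exists_cubeEmbedding_normalized φ hvC
    (Subtype.val_injective.comp e.injective) (fun i ↦ hΛC (e i).2) (fun i ↦ (e i).2.1)
  rw [hmed.k23Free.cubeEmbedding_ext (Φ := Φ) (f := downCubeEmbedding z v (π.trans e))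
    (by rw [hΦ₀, downCubeEmbedding_false]) (fun c ↦ by rw [hΦ₁, downCubeEmbedding_single]; rfl),
    range_downCubeEmbedding]
end

section
/- Gate-detection in a cube: let G be a finite median graph, C a gated cube of G of dimension at least 2, u a vertex of C, N(u) the neighbors of u in C, and x a vertex of G whose gate in C is not the vertex of C opposite to u. Then the gate of x in C equals u if and only if all vertices of N(u) are at the same distance from x. -/
open SimpleGraph Function Finset

section Hamming

variable {ι : Type*} [Fintype ι] {β : ι → Type*} [∀ i, DecidableEq (β i)]

theorem hammingDist_eq_card_iff {p q : ∀ i, β i} :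
    hammingDist p q = Fintype.card ι ↔ ∀ i, p i ≠ q i := by
  simp [hammingDist, ← card_univ, card_filter_eq_iff]

theorem exists_ne_ne_of_two_le_hammingDist {p q : ∀ i, β i} (h : 2 ≤ hammingDist p q) (i : ι) :
    ∃ j, p j ≠ q j ∧ j ≠ i := by
  obtain ⟨j, hj, hji⟩ := exists_mem_ne (s := univ.filter fun j => p j ≠ q j) h i
  exact ⟨j, (mem_filter.1 hj).2, hji⟩

variable [DecidableEq ι]

theorem hammingDist_update_add (p q : ∀ i, β i) (i : ι) (c : β i) :
    hammingDist (update p i c) q + (if p i ≠ q i then 1 else 0) =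
      hammingDist p q + (if c ≠ q i then 1 else 0) := by
  have hrest : ∀ k ∈ univ.erase i,
      (if update p i c k ≠ q k then 1 else 0) = (if p k ≠ q k then 1 else 0) := fun k hk => by
    rw [update_of_ne (ne_of_mem_erase hk)]
  simp only [hammingDist, card_filter]
  rw [← add_sum_erase _ _ (mem_univ i), ← add_sum_erase _ _ (mem_univ i), sum_congr rfl hrest,
    update_self]
  ring

variable {p q : ι → Bool} {i : ι}

theorem hammingDist_update_not_add_one (h : p i ≠ q i) :
    hammingDist (update p i (!p i)) q + 1 = hammingDist p q := by
  simpa [h, Bool.eq_not_of_ne h] using hammingDist_update_add p q i (!p i)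

theorem hammingDist_update_not_of_eq (h : p i = q i) :
    hammingDist (update p i (!p i)) q = hammingDist p q + 1 := by
  simpa [h] using hammingDist_update_add p q i (!p i)

theorem hammingDist_update_not_right (p : ι → Bool) (i : ι) :
    hammingDist p (update p i (!p i)) = 1 := by
  rw [hammingDist_comm, hammingDist_update_not_of_eq rfl, hammingDist_self]

theorem exists_hammingDist_update_not_ne {r : ι → Bool} (hpq : ∀ i, p i ≠ q i) (hrp : r ≠ p)
    (hrq : r ≠ q) :
    ∃ i j, hammingDist r (update p i (!p i)) ≠ hammingDist r (update p j (!p j)) := by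
  obtain ⟨i, hi⟩ := ne_iff.1 hrp
  obtain ⟨j, hj⟩ := ne_iff.1 hrq
  have hpj : p j = r j := (Bool.eq_not_of_ne (hpq j)).trans (Bool.eq_not_of_ne hj).symm
  have h₁ := hammingDist_update_not_add_one (Ne.symm hi)
  have h₂ := hammingDist_update_not_of_eq hpj
  refine ⟨i, j, ?_⟩
  rw [hammingDist_comm r, hammingDist_comm r]
  omega

end Hamming

theorem cubeGraph_adj_iff {n : ℕ} {p q : Fin n → Bool} :
    (cubeGraph n).Adj p q ↔ hammingDist p q = 1 := by
  change p ≠ q ∧ (hammingDist p q = 1 ∨ hammingDist q p = 1) ↔ _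
  rw [hammingDist_comm q p, or_self, and_iff_right_iff_imp]
  rintro h rfl
  simp at h

theorem cubeGraph_adj_update_not {n : ℕ} (p : Fin n → Bool) (i : Fin n) :
    (cubeGraph n).Adj p (update p i (!p i)) :=
  cubeGraph_adj_iff.2 (hammingDist_update_not_right p i)

def IsMedian {V : Type*} (G : SimpleGraph V) (x y z m : V) : Prop :=
  m ∈ interval G x y ∧ m ∈ interval G y z ∧ m ∈ interval G z x

namespace MedianGraph

variable {V : Type*} {G : SimpleGraph V}

theorem dist_ne_of_adj (hconn : G.Connected) (hmed : MedianGraph G) {a b : V} (hab : G.Adj a b)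
    (z : V) : G.dist a z ≠ G.dist b z := by
  obtain ⟨m, ⟨hm_ab, hm_bz, hm_za⟩, -⟩ := hmed a b z
  have hab₁ : G.dist a b = 1 := dist_eq_one_iff_adj.2 hab
  have hba₁ : G.dist b a = 1 := dist_eq_one_iff_adj.2 hab.symm
  have hsum : G.dist a m + G.dist m b = 1 := hab₁ ▸ hm_ab
  rcases Nat.eq_zero_or_pos (G.dist a m) with ham | ham
  · obtain rfl : a = m := hconn.dist_eq_zero_iff.1 ham
    have : G.dist b a + G.dist a z = G.dist b z := hm_bz
    omega
  · obtain rfl : m = b := hconn.dist_eq_zero_iff.1 (by omega)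
    have : G.dist z m + G.dist m a = G.dist z a := hm_za
    rw [SimpleGraph.dist_comm (u := z), SimpleGraph.dist_comm (u := z), hba₁] at this
    omega

theorem isMedian_of_adj (hconn : G.Connected) (hmed : MedianGraph G) {a₁ a₂ b m : V}
    (hne : a₁ ≠ a₂) (h₁ : G.Adj m a₁) (h₂ : G.Adj m a₂) (hd₁ : G.dist m b + 1 = G.dist a₁ b)
    (hd₂ : G.dist m b + 1 = G.dist a₂ b) : IsMedian G a₁ a₂ b m := by
  have e₁ : G.dist a₁ m = 1 := dist_eq_one_iff_adj.2 h₁.symm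
  have e₂ : G.dist m a₂ = 1 := dist_eq_one_iff_adj.2 h₂
  have hd : G.dist a₁ a₂ = 2 := by
    have hle := hconn.dist_triangle (u := a₁) (v := m) (w := a₂)
    have h0 : G.dist a₁ a₂ ≠ 0 := fun h => hne (hconn.dist_eq_zero_iff.1 h)
    have h1 : G.dist a₁ a₂ ≠ 1 := fun h => dist_ne_of_adj hconn hmed (dist_eq_one_iff_adj.1 h) m
      (by rw [e₁, SimpleGraph.dist_comm, e₂])
    omega
  refine ⟨?_, ?_, ?_⟩
  · show G.dist a₁ m + G.dist m a₂ = G.dist a₁ a₂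
    omega
  · show G.dist a₂ m + G.dist m b = G.dist a₂ b
    rw [SimpleGraph.dist_comm, e₂]
    omega
  · show G.dist b m + G.dist m a₁ = G.dist b a₁
    rw [SimpleGraph.dist_comm (u := m), e₁, SimpleGraph.dist_comm (u := b),
      SimpleGraph.dist_comm (u := b)]
    omega

theorem eq_of_adj_of_dist_add_one (hconn : G.Connected) (hmed : MedianGraph G)
    {a₁ a₂ b m m' : V} (hne : a₁ ≠ a₂) (h₁ : G.Adj m a₁) (h₂ : G.Adj m a₂) (h₁' : G.Adj m' a₁)
    (h₂' : G.Adj m' a₂) (hd₁ : G.dist m b + 1 = G.dist a₁ b) (hd₂ : G.dist m b + 1 = G.dist a₂ b)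
    (hd : G.dist m b = G.dist m' b) : m = m' :=
  (hmed a₁ a₂ b).unique (isMedian_of_adj hconn hmed hne h₁ h₂ hd₁ hd₂)
    (isMedian_of_adj hconn hmed hne h₁' h₂' (hd ▸ hd₁) (hd ▸ hd₂))

theorem dist_ne_dist_of_cube_square (hconn : G.Connected) (hmed : MedianGraph G) {n : ℕ}
    (f : cubeGraph n →g G) (hf : Injective f) {p : Fin n → Bool} {i j : Fin n} (hji : j ≠ i)
    (b : V) (hi : G.dist (f p) b + 1 = G.dist (f (update p i (!p i))) b)
    (hj : G.dist (f p) b + 1 = G.dist (f (update p j (!p j))) b) :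
    G.dist (f p) b ≠ G.dist (f (update (update p i (!p i)) j (!p j))) b := by
  set p₁ := update p i (!p i)
  set p₂ := update p j (!p j)
  set c := update p₁ j (!p j)
  have hadj : ∀ s k, G.Adj (f s) (f (update s k (!s k))) := fun s k =>
    f.map_adj (cubeGraph_adj_update_not s k)
  have hc₁ : update p₁ j (!p₁ j) = c := by
    simp only [p₁, c, update_of_ne hji]
  have hc₂ : update p₂ i (!p₂ i) = c := by
    simp only [p₁, p₂, c, update_of_ne hji.symm]
    exact update_comm hji _ _ _
  have hne₁₂ : f p₁ ≠ f p₂ := hf.ne fun e => by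
    simpa [p₁, p₂, update_of_ne hji.symm] using congrFun e i
  intro hd
  have hpc : f p = f c := eq_of_adj_of_dist_add_one hconn hmed hne₁₂ (hadj p i) (hadj p j)
    (hc₁ ▸ (hadj p₁ j).symm) (hc₂ ▸ (hadj p₂ i).symm) hi hj hd
  simpa [p₁, c, update_of_ne hji.symm] using congrFun (hf hpc) i

theorem dist_eq_hammingDist_of_cube (hconn : G.Connected) (hmed : MedianGraph G) {n : ℕ}
    (f : cubeGraph n →g G) (hf : Injective f) (p q : Fin n → Bool) :
    G.dist (f p) (f q) = hammingDist p q := by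
  induction hh : hammingDist p q using Nat.strong_induction_on generalizing p with
  | _ h ih =>
  obtain rfl | ⟨i, hi⟩ := (eq_or_ne p q).imp_right ne_iff.1
  · rw [← hh, hammingDist_self, dist_self]
  set p₁ := update p i (!p i) with hp₁
  have hadj : G.Adj (f p) (f p₁) := f.map_adj (cubeGraph_adj_update_not p i)
  have hh₁ : hammingDist p₁ q + 1 = h := hh ▸ hammingDist_update_not_add_one hi
  have hd₁ : G.dist (f p₁) (f q) = h - 1 := ih (h - 1) (by omega) p₁ (by omega)
  have hup := hconn.dist_triangle (u := f p) (v := f p₁) (w := f q)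
  have hlow := hconn.dist_triangle (u := f p₁) (v := f p) (w := f q)
  have hne : G.dist (f p) (f q) ≠ G.dist (f p₁) (f q) := dist_ne_of_adj hconn hmed hadj (f q)
  rw [dist_eq_one_iff_adj.2 hadj] at hup
  rw [dist_eq_one_iff_adj.2 hadj.symm] at hlow
  -- bipartiteness leaves `h - 2` as the only alternative to `h`, and the median excludes it
  suffices G.dist (f p) (f q) + 2 ≠ h by omega
  intro hd
  obtain ⟨j, hj, hji⟩ := exists_ne_ne_of_two_le_hammingDist (hh ▸ (by omega : 2 ≤ h)) i
  have hp₁j : p₁ j = p j := update_of_ne hji _ _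
  have hh₂ : hammingDist (update p j (!p j)) q + 1 = h := hh ▸ hammingDist_update_not_add_one hj
  have hhc : hammingDist (update p₁ j (!p j)) q + 1 = hammingDist p₁ q := by
    rw [← hp₁j]
    exact hammingDist_update_not_add_one (hp₁j ▸ hj)
  have hd₂ := ih (h - 1) (by omega) _ (by omega : hammingDist (update p j (!p j)) q = h - 1)
  have hdc := ih (h - 2) (by omega) _ (by omega : hammingDist (update p₁ j (!p j)) q = h - 2)
  have hsquare := dist_ne_dist_of_cube_square (p := p) hconn hmed f hf hji (f q)
  rw [← hp₁] at hsquare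
  exact hsquare (by omega) (by omega) (by omega)

end MedianGraph

theorem SimpleGraph.Iso.exists_embedding_range_eq {V W : Type*} {G : SimpleGraph V}
    {H : SimpleGraph W} {C : Set V} (φ : G.induce C ≃g H) : ∃ f : H ↪g G, Set.range f = C := by
  refine ⟨(Embedding.induce C).comp φ.symm.toEmbedding, Set.ext fun v => ⟨?_, fun hv => ?_⟩⟩
  · rintro ⟨p, rfl⟩
    exact (φ.symm p).2
  · exact ⟨φ ⟨v, hv⟩, by simp⟩

theorem median_gate_detection_general {V : Type*} (G : SimpleGraph V)
    (hconn : G.Connected) (hmed : MedianGraph G)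
    (C : Set V) (n : ℕ)
    (hiso : Nonempty (G.induce C ≃g cubeGraph n))
    (u : V) (hu : u ∈ C)
    (o : V) (ho : o ∈ C) (hopp : G.dist u o = n)
    (x g : V) (hgC : g ∈ C) (hgate : ∀ y ∈ C, g ∈ interval G x y)
    (hgo : g ≠ o) :
    g = u ↔ ∀ w₁ ∈ {w : V | w ∈ C ∧ G.Adj u w}, ∀ w₂ ∈ {w : V | w ∈ C ∧ G.Adj u w},
      G.dist x w₁ = G.dist x w₂ := by
  have hdist : ∀ y ∈ C, G.dist x y = G.dist x g + G.dist g y := fun y hy => (hgate y hy).symm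
  constructor
  · rintro rfl w₁ ⟨hw₁, hu₁⟩ w₂ ⟨hw₂, hu₂⟩
    rw [hdist w₁ hw₁, hdist w₂ hw₂, dist_eq_one_iff_adj.2 hu₁, dist_eq_one_iff_adj.2 hu₂]
  intro hequi
  by_contra hgu
  obtain ⟨f, rfl⟩ := hiso.some.exists_embedding_range_eq
  obtain ⟨p, rfl⟩ := hu
  obtain ⟨q, rfl⟩ := ho
  obtain ⟨r, rfl⟩ := hgC
  have hcube : ∀ s t, G.dist (f s) (f t) = hammingDist s t :=
    MedianGraph.dist_eq_hammingDist_of_cube hconn hmed f.toHom f.injective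
  have hpq : ∀ k, p k ≠ q k := hammingDist_eq_card_iff.1 (by simpa [hcube] using hopp)
  obtain ⟨i, j, hij⟩ :=
    exists_hammingDist_update_not_ne hpq (ne_of_apply_ne f hgu) (ne_of_apply_ne f hgo)
  have hnbr : ∀ k, f (update p k (!p k)) ∈ {w | w ∈ Set.range f ∧ G.Adj (f p) w} := fun k =>
    ⟨⟨_, rfl⟩, f.map_adj_iff.2 (cubeGraph_adj_update_not p k)⟩
  have := hequi _ (hnbr i) _ (hnbr j)
  rw [hdist _ (hnbr i).1, hdist _ (hnbr j).1] at this
  exact hij (by simpa [hcube] using this)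

/-- Gate detection in a cube of a median graph: let `C` be a cube of dimension `n ≥ 2`,
`u ∈ C`, `o` the vertex of `C` opposite to `u`, and let `g` be the gate of `x` in `C`
with `g ≠ o`. Then `g = u` iff all neighbors of `u` in `C` are equidistant from `x`. -/
theorem median_gate_detection {V : Type*} [Fintype V] (G : SimpleGraph V)
    (hconn : G.Connected) (hmed : MedianGraph G)
    (C : Set V) (n : ℕ) (hn : 2 ≤ n)
    (hiso : Nonempty (G.induce C ≃g cubeGraph n))
    (u : V) (hu : u ∈ C)
    (o : V) (ho : o ∈ C) (hopp : G.dist u o = n)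
    (x g : V) (hgC : g ∈ C) (hgate : ∀ y ∈ C, g ∈ interval G x y)
    (hgo : g ≠ o) :
    g = u ↔ ∀ w₁ ∈ {w : V | w ∈ C ∧ G.Adj u w}, ∀ w₂ ∈ {w : V | w ∈ C ∧ G.Adj u w},
      G.dist x w₁ = G.dist x w₂ :=
  median_gate_detection_general G hconn hmed C n hiso u hu o ho hopp x g hgC hgate hgo
end
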